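/- arXiv:1707.01755 — 3 statements merged into one kernel-verified Lean document; each statement's English description precedes it below -/
import Mathlib

section
/- Let c be a prime power, let d ≥ 1 be an integer, and let q be a prime number not dividing d. Then φ(c^{d·q} - 1) ≥ d · φ(c^q - 1), where φ denotes Euler's totient function. -/
/-!
Put `t = c ^ q`, so that `c ^ (d * q) - 1 = t ^ d - 1`. Reduction modulo `t - 1` maps
`(ℤ/(t ^ d - 1))ˣ` onto `(ℤ/(t - 1))ˣ`, and `t` lies in its kernel. Since `t ^ k - 1` is a
nonzero number smaller than `t ^ d - 1` for `0 < k < d`, the class of `t` has order exactly `d`,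
so `d` divides the order of the kernel, which is `φ(t ^ d - 1) / φ(t - 1)`. Hence
`d * φ(t - 1) ∣ φ(t ^ d - 1)`.
-/

theorem MonoidHom.orderOf_mul_natCard_range_dvd {G H : Type*} [Group G] [Group H]
    (f : G →* H) {x : G} (hx : x ∈ f.ker) : orderOf x * Nat.card f.range ∣ Nat.card G := by
  rw [← f.ker.card_mul_index, Subgroup.index_ker]
  exact mul_dvd_mul_right (Subgroup.orderOf_dvd_natCard _ hx) _

theorem ZMod.orderOf_natCast_mod_pow_sub_one {t d : ℕ} (ht : 1 < t) (hd : 0 < d) :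
    orderOf (t : ZMod (t ^ d - 1)) = d := by
  rw [orderOf_eq_iff hd]
  refine ⟨?_, fun k hkd hk hpow => ?_⟩
  · have hsucc : t ^ d = (t ^ d - 1) + 1 :=
      (Nat.sub_add_cancel (Nat.one_le_pow _ _ (by omega))).symm
    rw [← Nat.cast_pow, hsucc, Nat.cast_add, ZMod.natCast_self, zero_add, Nat.cast_one]
  · have htk : 1 < t ^ k := Nat.one_lt_pow hk.ne' ht
    have hlt : t ^ k + 1 < t ^ d := calc
      t ^ k + 1 < t ^ k * t := by nlinarith
      _ = t ^ (k + 1) := (pow_succ t k).symm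
      _ ≤ t ^ d := Nat.pow_le_pow_right (by omega) hkd
    rw [← Nat.cast_pow, ← Nat.cast_one (R := ZMod (t ^ d - 1)), ZMod.natCast_eq_natCast_iff',
      Nat.mod_eq_of_lt (by omega), Nat.mod_eq_of_lt (by omega)] at hpow
    omega

theorem Nat.mul_totient_sub_one_dvd_totient_pow_sub_one {t d : ℕ} (ht : 1 < t) (hd : 0 < d) :
    d * (t - 1).totient ∣ (t ^ d - 1).totient := by
  have : NeZero (t ^ d - 1) := ⟨by have := Nat.one_lt_pow hd.ne' ht; omega⟩
  have : NeZero (t - 1) := ⟨by omega⟩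
  have hcop : t.Coprime (t ^ d - 1) :=
    ((Nat.coprime_self_sub_right (Nat.one_le_pow _ _ (by omega))).mpr (Nat.coprime_one_right _)
      ).coprime_dvd_left (dvd_pow_self t hd.ne')
  let f := ZMod.unitsMap (Nat.sub_one_dvd_pow_sub_one t d)
  let u := ZMod.unitOfCoprime t hcop
  have hu : u ∈ f.ker := by
    rw [MonoidHom.mem_ker, Units.ext_iff, ZMod.unitsMap_val, ZMod.coe_unitOfCoprime,
      ZMod.cast_natCast (Nat.sub_one_dvd_pow_sub_one t d), ← Nat.sub_add_cancel ht.le]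
    simp
  have hdvd := f.orderOf_mul_natCard_range_dvd hu
  rwa [← orderOf_units, ZMod.coe_unitOfCoprime, ZMod.orderOf_natCast_mod_pow_sub_one ht hd,
    MonoidHom.range_eq_top.mpr (ZMod.unitsMap_surjective _), Subgroup.card_top,
    Nat.card_eq_fintype_card, Nat.card_eq_fintype_card, ZMod.card_units_eq_totient,
    ZMod.card_units_eq_totient] at hdvd

theorem totient_pow_sub_one_ge_general
    (c d q : ℕ) (hc : IsPrimePow c) (hd : 1 ≤ d) (hq : q.Prime) :
    d * Nat.totient (c ^ q - 1) ≤ Nat.totient (c ^ (d * q) - 1) := by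
  have ht : 1 < c ^ q := Nat.one_lt_pow hq.ne_zero hc.one_lt
  rw [mul_comm d q, pow_mul]
  have hpos : 0 < (c ^ q) ^ d - 1 := Nat.sub_pos_of_lt (Nat.one_lt_pow (by omega) ht)
  exact Nat.le_of_dvd (Nat.totient_pos.mpr hpos)
    (Nat.mul_totient_sub_one_dvd_totient_pow_sub_one ht hd)

/-- Let `c` be a prime power, `d ≥ 1` an integer, and `q` a prime not dividing `d`.
Then `φ(c ^ (d * q) - 1) ≥ d * φ(c ^ q - 1)`, where `φ` is Euler's totient function. -/
theorem totient_pow_sub_one_ge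
    (c d q : ℕ) (hc : IsPrimePow c) (hd : 1 ≤ d) (hq : q.Prime) (hqd : ¬ q ∣ d) :
    d * Nat.totient (c ^ q - 1) ≤ Nat.totient (c ^ (d * q) - 1) :=
  totient_pow_sub_one_ge_general c d q hc hd hq
end

section
/- Let F be a finite field with c elements and let r ≥ 1 be an integer. Then the number of monic irreducible polynomials of degree r in F[X] is at least φ(c^r - 1)/r, where φ is Euler's totient function. Equivalently, every generator of the multiplicative group of the field with c^r elements has degree exactly r over F, and the generators fall into orbits of size r under the Frobenius, each orbit giving a distinct monic irreducible polynomial of degree r. -/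
/-!
A generator `x` of the cyclic group `Eˣ`, for `E` the extension of `F` of degree `r`, generates
`E` as a field, so its minimal polynomial is monic irreducible of degree `r`. There are
`φ(c ^ r - 1)` such generators, and a polynomial of degree `r` has at most `r` roots in `E`, so
their minimal polynomials take at least `φ(c ^ r - 1) / r` distinct values.
-/

open Polynomial IntermediateField

theorem Polynomial.finite_setOf_natDegree_le (R : Type*) [Semiring R] [Finite R] (n : ℕ) :
    {f : R[X] | f.natDegree ≤ n}.Finite := by
  refine (Set.finite_range fun v : Fin (n + 1) → R ↦ ∑ i, C (v i) * X ^ (i : ℕ)).subset ?_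
  intro f hf
  exact ⟨fun i ↦ f.coeff i, (Fin.sum_univ_eq_sum_range (fun i ↦ C (f.coeff i) * X ^ i) _).trans
    (as_sum_range_C_mul_X_pow' f (Nat.lt_succ_of_le hf)).symm⟩

theorem Subgroup.zpowers_eq_top_of_orderOf_eq_card {G : Type*} [Group G] [Finite G] {g : G}
    (h : orderOf g = Nat.card G) : zpowers g = ⊤ :=
  (card_eq_iff_eq_top _).mp (Nat.card_zpowers g ▸ h)

section

variable {F E : Type*} [Field F] [Field E] [Algebra F E]

theorem IntermediateField.adjoin_simple_eq_top_of_zpowers_eq_top {x : Eˣ}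
    (hx : Subgroup.zpowers x = ⊤) : F⟮(x : E)⟯ = ⊤ := by
  refine eq_top_iff.mpr fun z _ ↦ ?_
  obtain rfl | hz := eq_or_ne z 0
  · exact zero_mem _
  obtain ⟨n, hn⟩ := Subgroup.mem_zpowers_iff.mp (hx ▸ Subgroup.mem_top (Units.mk0 z hz))
  rw [← Units.val_mk0 hz, ← hn, Units.val_zpow_eq_zpow_val]
  exact zpow_mem (mem_adjoin_simple_self F _) n

theorem minpoly.natDegree_eq_finrank_of_zpowers_eq_top [FiniteDimensional F E] {x : Eˣ}
    (hx : Subgroup.zpowers x = ⊤) : (minpoly F (x : E)).natDegree = Module.finrank F E := by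
  rw [← adjoin.finrank (.of_finite F _), adjoin_simple_eq_top_of_zpowers_eq_top hx,
    finrank_top']

theorem FiniteField.finrank_eq_of_card_eq_pow [Fintype F] [Fintype E] {r : ℕ}
    (h : Fintype.card E = Fintype.card F ^ r) : Module.finrank F E = r :=
  Nat.pow_right_injective Fintype.one_lt_card (Module.card_eq_pow_finrank.symm.trans h)

theorem card_le_mul_card_monic_irreducible [Finite F] [Algebra.IsIntegral F E]
    {r : ℕ} (s : Finset E) (hs : ∀ x ∈ s, (minpoly F x).natDegree = r) :
    s.card ≤ r * Nat.card {f : F[X] // f.Monic ∧ Irreducible f ∧ f.natDegree = r} := by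
  classical
  set T := {f : F[X] | f.Monic ∧ Irreducible f ∧ f.natDegree = r}
  have hT : T.Finite := (finite_setOf_natDegree_le F r).subset fun f hf ↦ hf.2.2.le
  change _ ≤ r * Nat.card T
  rw [Nat.card_coe_set_eq, Set.ncard_eq_toFinset_card T hT]
  refine Finset.card_le_mul_card_image_of_maps_to (f := minpoly F) (fun x hx ↦ ?_) r
    fun f hf ↦ ?_
  · have hint := Algebra.IsIntegral.isIntegral (R := F) x
    exact hT.mem_toFinset.mpr ⟨minpoly.monic hint, minpoly.irreducible hint, hs x hx⟩
  · have hf0 : f ≠ 0 := (hT.mem_toFinset.mp hf).1.ne_zero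
    have hfiber : ↑{x ∈ s | minpoly F x = f} ⊆ f.rootSet E := fun x hx ↦ by
      obtain ⟨-, rfl⟩ := Finset.mem_filter.mp hx
      exact (mem_rootSet_of_ne hf0).mpr (minpoly.aeval F x)
    calc {x ∈ s | minpoly F x = f}.card = Set.ncard (↑{x ∈ s | minpoly F x = f} : Set E) :=
          (Set.ncard_coe_finset _).symm
      _ ≤ (f.rootSet E).ncard := Set.ncard_le_ncard hfiber (rootSet_finite f E)
      _ ≤ f.natDegree := ncard_rootSet_le f E
      _ = r := (hT.mem_toFinset.mp hf).2.2

end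

/-- Let `F` be a finite field with `c` elements and `r ≥ 1`.  Then the number of monic
irreducible polynomials of degree `r` in `F[X]` is at least `φ(c ^ r - 1) / r`.
Moreover, every generator of the multiplicative group of the field with `c ^ r`
elements has degree exactly `r` over `F`. -/
theorem count_irreducible_ge_totient_div
    (F : Type*) [Field F] [Fintype F] (c r : ℕ) (hc : Fintype.card F = c)
    (hr : 1 ≤ r) :
    Nat.totient (c ^ r - 1) / r ≤
      Nat.card {f : Polynomial F // f.Monic ∧ Irreducible f ∧ f.natDegree = r} ∧
    ∀ (E : Type) [Field E] [Algebra F E] [Fintype E], Fintype.card E = c ^ r →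
      ∀ x : Eˣ, (∀ z : Eˣ, z ∈ Subgroup.zpowers x) →
        (minpoly F (x : E)).natDegree = r := by
  classical
  subst hc
  refine ⟨?_, fun E _ _ _ hE x hx ↦ ?_⟩
  · obtain ⟨p, _⟩ := CharP.exists F
    have : Fact p.Prime := ⟨CharP.char_is_prime F p⟩
    have : NeZero r := ⟨by omega⟩
    let E := FiniteField.Extension F p r
    let _ : Fintype E := Fintype.ofFinite E
    let gens : Finset Eˣ := {x | orderOf x = Fintype.card Eˣ}
    have hgens : gens.card = Nat.totient (Fintype.card F ^ r - 1) := by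
      rw [IsCyclic.card_orderOf_eq_totient dvd_rfl, Fintype.card_units, Fintype.card_eq_nat_card,
        FiniteField.natCard_extension, Nat.card_eq_fintype_card]
    have hdeg : ∀ x ∈ gens.map ⟨Units.val, Units.val_injective⟩, (minpoly F x).natDegree = r := by
      simp only [Finset.mem_map, Function.Embedding.coeFn_mk]
      rintro _ ⟨x, hx, rfl⟩
      have hx : Subgroup.zpowers x = ⊤ := Subgroup.zpowers_eq_top_of_orderOf_eq_card <|
        (Finset.mem_filter.mp hx).2.trans Nat.card_eq_fintype_card.symm
      rw [minpoly.natDegree_eq_finrank_of_zpowers_eq_top hx, FiniteField.finrank_extension]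
    refine Nat.div_le_of_le_mul ?_
    rw [← hgens, ← Finset.card_map ⟨Units.val, Units.val_injective⟩]
    exact card_le_mul_card_monic_irreducible _ hdeg
  · rw [minpoly.natDegree_eq_finrank_of_zpowers_eq_top ((Subgroup.eq_top_iff' _).mpr hx),
      FiniteField.finrank_eq_of_card_eq_pow hE]
end

section
/- Let k be a finite field, let l be a finite field extension of k of degree d₀, let V be a finite index set, and let (e_v)_{v∈V} be a family of positive integers. Then there exists an integer N such that for every prime number q ≥ N, every family (M_v)_{v∈V} of finite field extensions of k with [M_v : k] = d₀ · e_v · q for each v, and every finite field extension E of k with [E : k] = d₀ · (q - 1), there exists a surjective k-algebra homomorphism from the polynomial ring k[t] onto the product k-algebra (∏_{v∈V} M_v) × l × E. -/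
/-!
A surjection `k[t] → ∏ Fᵢ` onto a finite product of finite extensions of `k` amounts to
primitive elements `αᵢ ∈ Fᵢ` with pairwise distinct minimal polynomials (Chinese remainder
theorem). For `l` and `E` any primitive elements will do: their degrees `d₀` and `d₀ (q - 1)`
differ from each other and from the degrees `d₀ eᵥ q` of the `Mᵥ`. An extension of degree `n`
of a field with `c` elements has at most `n c^(n/2)` non-primitive elements, hence at least
`(cⁿ - n c^(n/2)) / n` minimal polynomials of primitive elements; for `q` large this exceeds
`|V|`, and Hall's marriage theorem makes the choices for the `Mᵥ` distinct.
-/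

open Polynomial Module Finset Function

theorem Nat.mul_self_le_two_pow {m : ℕ} (hm : 4 ≤ m) : m * m ≤ 2 ^ m := by
  induction m, hm using Nat.le_induction with
  | base => norm_num
  | succ m hm ih =>
    calc (m + 1) * (m + 1) = m * m + (2 * m + 1) := by ring
      _ ≤ 2 ^ m + 2 ^ m := by nlinarith
      _ = 2 ^ (m + 1) := by ring

theorem Nat.mul_add_mul_pow_half_le_pow {c n K : ℕ} (hc : 2 ≤ c) (hn : 8 * (K + 2) ≤ n) :
    n * K + n * c ^ (n / 2) ≤ c ^ n := by
  set m := n / 2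
  have hm : 1 ≤ c ^ m := Nat.one_le_pow _ _ (by omega)
  have hsq : n * (K + 1) ≤ m * m :=
    calc n * (K + 1) ≤ 3 * m * (K + 1) := Nat.mul_le_mul_right _ (by omega)
      _ = m * (3 * (K + 1)) := by ring
      _ ≤ m * m := Nat.mul_le_mul_left _ (by omega)
  calc n * K + n * c ^ m ≤ n * K * c ^ m + n * c ^ m :=
        Nat.add_le_add_right (Nat.le_mul_of_pos_right _ hm) _
    _ = n * (K + 1) * c ^ m := by ring
    _ ≤ 2 ^ m * c ^ m := Nat.mul_le_mul_right _ (hsq.trans (Nat.mul_self_le_two_pow (by omega)))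
    _ ≤ c ^ m * c ^ m := Nat.mul_le_mul_right _ (Nat.pow_le_pow_left hc m)
    _ ≤ c ^ n := by rw [← pow_add]; exact Nat.pow_le_pow_right (by omega) (by omega)

theorem Nat.le_div_two_of_dvd_of_ne {d n : ℕ} (h : d ∣ n) (hn : 0 < n) (hne : d ≠ n) :
    d ≤ n / 2 := by
  obtain ⟨t, rfl⟩ := h
  rw [Nat.le_div_iff_mul_le two_pos]
  rcases t with _ | _ | t
  · simp at hn
  · simp at hne
  · nlinarith

theorem Finset.exists_injective_mem_of_card_le {ι α : Type*} [Fintype ι] [DecidableEq α]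
    (S : ι → Finset α) (hS : ∀ i, Fintype.card ι ≤ #(S i)) :
    ∃ f : ι → α, Injective f ∧ ∀ i, f i ∈ S i := by
  refine (all_card_le_biUnion_card_iff_exists_injective S).mp fun s => ?_
  obtain rfl | ⟨i, hi⟩ := s.eq_empty_or_nonempty
  · simp
  · exact (card_le_univ s).trans ((hS i).trans (card_le_card (subset_biUnion_of_mem S hi)))

namespace Polynomial

variable {R A B : Type*} [CommRing R] [Ring A] [Ring B] [Algebra R A] [Algebra R B]

theorem aeval_prod_surjective_of_isCoprime {a : A} {b : B} {p q : R[X]}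
    (ha : Surjective (aeval a : R[X] →ₐ[R] A))
    (hb : Surjective (aeval b : R[X] →ₐ[R] B))
    (hp : aeval a p = 0) (hq : aeval b q = 0) (hpq : IsCoprime p q) :
    Surjective (aeval (a, b) : R[X] →ₐ[R] A × B) := by
  rintro ⟨x, y⟩
  obtain ⟨r, rfl⟩ := ha x
  obtain ⟨s, rfl⟩ := hb y
  obtain ⟨u, w, huw⟩ := hpq
  -- `w * q` is `1` modulo `p` and `0` modulo `q`, and symmetrically for `u * p`
  refine ⟨r * (w * q) + s * (u * p), ?_⟩
  have hwq : w * q = 1 - u * p := by rw [← huw]; ring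
  have hup : u * p = 1 - w * q := by rw [← huw]; ring
  rw [aeval_prod_apply]
  congr 1
  · simp [hwq, hp]
  · simp [hup, hq]

theorem aeval_pi_surjective_of_pairwise_isCoprime {ι : Type*} [Finite ι] {A : ι → Type*}
    [∀ i, Ring (A i)] [∀ i, Algebra R (A i)] {a : ∀ i, A i} {p : ι → R[X]}
    (ha : ∀ i, Surjective (aeval (a i) : R[X] →ₐ[R] A i))
    (hp : ∀ i, aeval (a i) (p i) = 0) (hpq : Pairwise (IsCoprime on p)) :
    Surjective (aeval a : R[X] →ₐ[R] ∀ i, A i) := by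
  intro x
  choose r hr using fun i => ha i (x i)
  obtain ⟨s, hs⟩ := Ideal.exists_forall_sub_mem_ideal (I := fun i => Ideal.span {p i})
    (fun i j hij => (Ideal.isCoprime_span_singleton_iff _ _).mpr (hpq hij)) r
  refine ⟨s, ?_⟩
  ext i
  obtain ⟨t, ht⟩ := Ideal.mem_span_singleton'.mp (hs i)
  rw [aeval_pi_apply₂, ← hr i, ← sub_eq_zero, ← map_sub, ← ht, map_mul, hp i, mul_zero]

theorem aeval_pi_prod_eq_zero {ι : Type*} [Fintype ι] {A : ι → Type*}
    [∀ i, CommSemiring (A i)] [∀ i, Algebra R (A i)] {a : ∀ i, A i} {p : ι → R[X]}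
    (hp : ∀ i, aeval (a i) (p i) = 0) : aeval a (∏ i, p i) = 0 := by
  classical
  ext i
  rw [aeval_pi_apply₂, map_prod, Pi.zero_apply]
  exact prod_eq_zero (mem_univ i) (hp i)

end Polynomial

theorem minpoly.isCoprime_of_ne {k A B : Type*} [Field k] [Ring A] [IsDomain A] [Ring B]
    [IsDomain B] [Algebra k A] [Algebra k B]
    {a : A} {b : B} (ha : IsIntegral k a) (hb : IsIntegral k b) (h : minpoly k a ≠ minpoly k b) :
    IsCoprime (minpoly k a) (minpoly k b) := by
  rw [isCoprime_comm, Irreducible.coprime_iff_not_dvd (irreducible hb)]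
  exact fun hdvd => h (eq_of_irreducible_of_monic (irreducible ha)
    (aeval_eq_zero_of_dvd_aeval_eq_zero hdvd (aeval k b)) (monic ha))

theorem minpoly.isCoprime_of_natDegree_ne {k A B : Type*} [Field k] [Ring A] [IsDomain A]
    [Ring B] [IsDomain B] [Algebra k A] [Algebra k B] {a : A} {b : B} (ha : IsIntegral k a)
    (hb : IsIntegral k b) (h : (minpoly k a).natDegree ≠ (minpoly k b).natDegree) :
    IsCoprime (minpoly k a) (minpoly k b) :=
  isCoprime_of_ne ha hb fun hab => h (congrArg natDegree hab)

theorem card_filter_pow_eq_self_le {K : Type*} [Field K] [Fintype K] [DecidableEq K] {m : ℕ}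
    (hm : 1 < m) : #{x : K | x ^ m = x} ≤ m := by
  refine (card_le_degree_of_subset_roots fun x hx => ?_).trans_eq
    (FiniteField.X_pow_card_sub_X_natDegree_eq K hm)
  rw [mem_roots (FiniteField.X_pow_card_sub_X_ne_zero K hm)]
  simpa [sub_eq_zero] using (mem_filter.mp hx).2

theorem card_filter_minpoly_eq_le {k F : Type*} [Field k] [Field F] [Algebra k F] [Fintype F]
    [DecidableEq k[X]] {f : k[X]} (hf : f ≠ 0) :
    #{α : F | minpoly k α = f} ≤ f.natDegree := by
  rw [← natDegree_map (algebraMap k F)]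
  refine card_le_degree_of_subset_roots fun α hα => ?_
  rw [mem_roots (map_ne_zero hf), IsRoot, eval_map_algebraMap, ← (mem_filter.mp hα).2]
  exact minpoly.aeval k α

theorem aeval_surjective_of_natDegree_minpoly_eq_finrank {k F : Type*} [Field k] [Field F]
    [Algebra k F] [FiniteDimensional k F] {α : F} (h : (minpoly k α).natDegree = finrank k F) :
    Surjective (aeval α : k[X] →ₐ[k] F) := by
  refine (AlgHom.range_eq_top _).mp
    ((Algebra.adjoin_singleton_eq_range_aeval k α).symm.trans ?_)
  rw [← IntermediateField.adjoin_simple_toSubalgebra_of_isAlgebraic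
      (IsIntegral.of_finite k α).isAlgebraic,
    (Field.primitive_element_iff_minpoly_natDegree_eq k α).mpr h,
    IntermediateField.top_toSubalgebra]

namespace FiniteField

variable {k F : Type*} [Field k] [Fintype k] [Field F] [Algebra k F]

theorem pow_card_pow_natDegree_minpoly {α : F} (hα : IsIntegral k α) :
    α ^ Fintype.card k ^ (minpoly k α).natDegree = α := by
  have hdvd := (minpoly.irreducible hα).natDegree_dvd_iff_dvd_X_pow_card_pow_sub_X.mp dvd_rfl
  have := aeval_eq_zero_of_dvd_aeval_eq_zero hdvd (minpoly.aeval k α)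
  rwa [Nat.card_eq_fintype_card, map_sub, map_pow, aeval_X, sub_eq_zero] at this

theorem card_filter_natDegree_minpoly_ne_finrank_le [Fintype F] [DecidableEq F] :
    #{α : F | (minpoly k α).natDegree ≠ finrank k F} ≤
      finrank k F / 2 * Fintype.card k ^ (finrank k F / 2) := by
  set n := finrank k F
  set c := Fintype.card k
  have hc : 1 < c := Fintype.one_lt_card
  -- a non-primitive element lies in a proper subfield, of some degree `1 ≤ d ≤ n / 2`, and is
  -- therefore fixed by the `d`-th power of the Frobenius
  have hsub : ({α : F | (minpoly k α).natDegree ≠ n} : Finset F) ⊆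
      (Icc 1 (n / 2)).biUnion fun d => {α : F | α ^ c ^ d = α} := by
    intro α hα
    have hint : IsIntegral k α := .of_finite k α
    refine mem_biUnion.mpr ⟨_, mem_Icc.mpr ⟨minpoly.natDegree_pos hint, ?_⟩,
      mem_filter.mpr ⟨mem_univ _, pow_card_pow_natDegree_minpoly hint⟩⟩
    exact Nat.le_div_two_of_dvd_of_ne (minpoly.degree_dvd hint) finrank_pos (mem_filter.mp hα).2
  calc _ ≤ ∑ d ∈ Icc 1 (n / 2), #{α : F | α ^ c ^ d = α} :=
        (card_le_card hsub).trans card_biUnion_le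
    _ ≤ ∑ d ∈ Icc 1 (n / 2), c ^ (n / 2) := sum_le_sum fun d hd => by
        obtain ⟨hd1, hd2⟩ := mem_Icc.mp hd
        exact (card_filter_pow_eq_self_le (Nat.one_lt_pow (by omega) hc)).trans
          (Nat.pow_le_pow_right hc.le hd2)
    _ = n / 2 * c ^ (n / 2) := by simp

theorem exists_finset_minpoly_primitive [FiniteDimensional k F] {K : ℕ}
    (hK : 8 * (K + 2) ≤ finrank k F) :
    ∃ S : Finset k[X], K ≤ #S ∧
      ∀ f ∈ S, ∃ α : F, (minpoly k α).natDegree = finrank k F ∧ minpoly k α = f := by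
  classical
  have : Finite F := Module.finite_of_finite k
  have := Fintype.ofFinite F
  set n := finrank k F
  set P : Finset F := {α | (minpoly k α).natDegree = n}
  refine ⟨P.image (minpoly k), ?_, fun f hf => ?_⟩
  · have hfiber : ∀ f ∈ P.image (minpoly k), #{α ∈ P | minpoly k α = f} ≤ n := by
      intro f hf
      obtain ⟨α, hα, rfl⟩ := mem_image.mp hf
      calc _ ≤ #{β : F | minpoly k β = minpoly k α} :=
            card_le_card (filter_subset_filter _ (subset_univ P))
        _ ≤ n := (card_filter_minpoly_eq_le (minpoly.ne_zero (.of_finite k α))).trans_eq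
            (mem_filter.mp hα).2
    have hsplit : #P + #{α : F | (minpoly k α).natDegree ≠ n} = Fintype.card k ^ n := by
      rw [card_filter_add_card_filter_not, card_univ, card_eq_pow_finrank (K := k)]
    have hnonprimitive :
        #{α : F | (minpoly k α).natDegree ≠ n} ≤ n * Fintype.card k ^ (n / 2) :=
      card_filter_natDegree_minpoly_ne_finrank_le.trans
        (Nat.mul_le_mul_right _ (Nat.div_le_self n 2))
    have hcount := Nat.mul_add_mul_pow_half_le_pow (Fintype.one_lt_card (α := k)) hK
    have hfibers := card_le_mul_card_image P n hfiber
    exact Nat.le_of_mul_le_mul_left (by linarith) (by omega : 0 < n)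
  · obtain ⟨α, hα, rfl⟩ := mem_image.mp hf
    exact ⟨α, (mem_filter.mp hα).2, rfl⟩

theorem exists_natDegree_minpoly_eq_finrank [FiniteDimensional k F] :
    ∃ α : F, (minpoly k α).natDegree = finrank k F :=
  (Field.exists_primitive_element k F).imp fun α =>
    (Field.primitive_element_iff_minpoly_natDegree_eq k α).mp

theorem exists_primitive_pairwise_isCoprime_minpoly {ι : Type*} [Fintype ι]
    {M : ι → Type*} [∀ i, Field (M i)] [∀ i, Algebra k (M i)]
    [∀ i, FiniteDimensional k (M i)]
    (h : ∀ i, 8 * (Fintype.card ι + 2) ≤ finrank k (M i)) :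
    ∃ α : ∀ i, M i, (∀ i, (minpoly k (α i)).natDegree = finrank k (M i)) ∧
      Pairwise (IsCoprime on fun i => minpoly k (α i)) := by
  classical
  choose S hS hSprim using fun i => exists_finset_minpoly_primitive (F := M i) (h i)
  obtain ⟨f, hf_inj, hf⟩ := exists_injective_mem_of_card_le S hS
  choose α hα hαf using fun i => hSprim i _ (hf i)
  refine ⟨α, hα, fun i j hij => minpoly.isCoprime_of_ne (.of_finite k _) (.of_finite k _) ?_⟩
  rw [hαf, hαf]
  exact hf_inj.ne hij

end FiniteField

/-- Let `k` be a finite field, `l/k` a finite field extension of degree `d₀`, `V` a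
finite index set and `(e v)` a family of positive integers.  Then there is `N` such
that for every prime `q ≥ N`, every family `(M v)` of finite field extensions of `k`
with `[M v : k] = d₀ * e v * q`, and every finite field extension `E/k` with
`[E : k] = d₀ * (q - 1)`, there is a surjective `k`-algebra homomorphism
`k[t] → (∏ v, M v) × l × E`. -/
theorem surjection_from_polynomial_onto_product_with_section
    (k : Type) [Field k] [Fintype k]
    (l : Type) [Field l] [Algebra k l] [FiniteDimensional k l]
    (d₀ : ℕ) (hd₀ : Module.finrank k l = d₀)
    (V : Type) [Fintype V] (e : V → ℕ) (he : ∀ v, 0 < e v) :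
    ∃ N : ℕ, ∀ q : ℕ, N ≤ q → q.Prime →
      ∀ (M : V → Type) [∀ v, Field (M v)] [∀ v, Algebra k (M v)],
        (∀ v, Module.finrank k (M v) = d₀ * e v * q) →
        ∀ (E : Type) [Field E] [Algebra k E], Module.finrank k E = d₀ * (q - 1) →
          ∃ φ : Polynomial k →ₐ[k] (((v : V) → M v) × l × E),
            Function.Surjective φ := by
  refine ⟨8 * (Fintype.card V + 2), fun q hq _ M _ _ hM E _ _ hE => ?_⟩
  have hd₀pos : 0 < d₀ := hd₀ ▸ finrank_pos
  have hlE : d₀ < d₀ * (q - 1) := lt_mul_right hd₀pos (by omega)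
  have hEM v : d₀ * (q - 1) < d₀ * e v * q :=
    calc d₀ * (q - 1) < d₀ * q := Nat.mul_lt_mul_of_pos_left (by omega) hd₀pos
      _ ≤ d₀ * e v * q := Nat.mul_le_mul_right q (Nat.le_mul_of_pos_right d₀ (he v))
  have hqM v : 8 * (Fintype.card V + 2) ≤ finrank k (M v) :=
    hM v ▸ hq.trans (Nat.le_mul_of_pos_left q (Nat.mul_pos hd₀pos (he v)))
  have (v : V) : FiniteDimensional k (M v) :=
    Module.finite_of_finrank_pos (by have := hqM v; omega)
  have : FiniteDimensional k E := Module.finite_of_finrank_pos (by omega)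
  obtain ⟨α, hα, hα_coprime⟩ := FiniteField.exists_primitive_pairwise_isCoprime_minpoly hqM
  obtain ⟨β, hβ⟩ := FiniteField.exists_natDegree_minpoly_eq_finrank (k := k) (F := l)
  obtain ⟨γ, hγ⟩ := FiniteField.exists_natDegree_minpoly_eq_finrank (k := k) (F := E)
  have hβγ : Surjective (aeval (β, γ) : k[X] →ₐ[k] l × E) :=
    aeval_prod_surjective_of_isCoprime (aeval_surjective_of_natDegree_minpoly_eq_finrank hβ)
      (aeval_surjective_of_natDegree_minpoly_eq_finrank hγ) (minpoly.aeval k β)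
      (minpoly.aeval k γ) (minpoly.isCoprime_of_natDegree_ne (.of_finite k β) (.of_finite k γ)
        (by rw [hβ, hγ, hd₀, hE]; omega))
  have hcoprime : IsCoprime (∏ v, minpoly k (α v)) (minpoly k β * minpoly k γ) :=
    IsCoprime.prod_left fun v _ => .mul_right
      (minpoly.isCoprime_of_natDegree_ne (.of_finite k _) (.of_finite k β)
        (by rw [hα, hβ, hM, hd₀]; have := hEM v; omega))
      (minpoly.isCoprime_of_natDegree_ne (.of_finite k _) (.of_finite k γ)
        (by rw [hα, hγ, hM, hE]; have := hEM v; omega))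
  exact ⟨aeval (α, β, γ), aeval_prod_surjective_of_isCoprime
    (aeval_pi_surjective_of_pairwise_isCoprime
      (fun v => aeval_surjective_of_natDegree_minpoly_eq_finrank (hα v))
      (fun v => minpoly.aeval k (α v)) hα_coprime)
    hβγ (aeval_pi_prod_eq_zero fun v => minpoly.aeval k (α v))
    (by simp [aeval_prod_apply]) hcoprime⟩
end
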